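/- arXiv:1702.07003 — 4 statements merged into one kernel-verified Lean document; each statement's English description precedes it below -/
import Mathlib

section
/- Modified Gagliardo–Nirenberg inequality in dimension one (Lemma 2.2, case d = 1): for all real numbers a < b and every ε > 0 there exists a constant C_ε > 0 (depending only on ε, a, b) such that for every continuously differentiable function f : ℝ → ℝ one has ∫_a^b f(x)^4 dx ≤ ε · (∫_a^b (f'(x)^2 + f(x)^2) dx) · (∫_a^b |f(x) · log |f(x)|| dx)^2 + C_ε · ∫_a^b |f(x)| dx. -/
open MeasureTheory Real Set

/-!
Let `S = max_{[a,b]} |f|`. Pointwise, `f⁴ ≤ e^{3T} |f|` where `|f| ≤ e^T`, and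
`f⁴ ≤ S³ |f| ≤ S³ |f log |f|| / T` where `|f| > e^T`; hence
`∫ f⁴ ≤ e^{3T} ∫ |f| + (S³ / T) ∫ |f log |f||`, and it suffices to show `S³ ≤ ε T H L` once
`S > 2 e^T`, where `H` is the squared `H¹`-norm and `L = ∫ |f log |f||`.
On an interval of length `δ` with `δ H ≤ S² / 4`, AM-GM gives
`∫ |f'| ≤ (δ / S) ∫ f'² + S / 4 ≤ S / 2`, so `|f|` stays above `S / 2` on such an interval
around the maximum. Taking `δ = min (b - a) (S² / 4H)` gives
`H L ≥ c S³ log (S / 2) ≥ c S³ T` with `c = min 1 (b - a)² / 8`, and `T` is chosen so that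
`ε c T² ≥ 1`.
-/

lemma pow_four_le_pow_three_mul_abs {t K : ℝ} (h : |t| ≤ K) : t ^ 4 ≤ K ^ 3 * |t| := by
  calc t ^ 4 = |t| ^ 3 * |t| := by
        rw [← pow_succ, pow_abs, abs_of_nonneg (by positivity : (0 : ℝ) ≤ t ^ 4)]
    _ ≤ K ^ 3 * |t| := by gcongr

lemma pow_four_le_exp_add_mul_log {t S T : ℝ} (hT : 0 < T) (ht : |t| ≤ S) :
    t ^ 4 ≤ exp T ^ 3 * |t| + S ^ 3 / T * |t * log (|t|)| := by
  have hS : 0 ≤ S := (abs_nonneg t).trans ht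
  rcases le_or_gt |t| (exp T) with hsmall | hlarge
  · exact (pow_four_le_pow_three_mul_abs hsmall).trans (le_add_of_nonneg_right (by positivity))
  · have hlog : T ≤ log |t| := (lt_log_iff_exp_lt ((exp_pos T).trans hlarge)).2 hlarge |>.le
    have : |t| * T ≤ |t * log (|t|)| := by
      rw [abs_mul, abs_of_nonneg (hT.le.trans hlog)]
      gcongr
    calc t ^ 4 ≤ S ^ 3 * |t| := pow_four_le_pow_three_mul_abs ht
      _ ≤ S ^ 3 / T * |t * log (|t|)| := by
        rw [div_mul_eq_mul_div, le_div_iff₀ hT, mul_assoc]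
        gcongr
      _ ≤ _ := le_add_of_nonneg_left (by positivity)

lemma mul_log_le_abs_mul_log_abs {s t : ℝ} (hs : 1 ≤ s) (hst : s ≤ |t|) :
    s * log s ≤ |t * log (|t|)| := by
  have hlog : log s ≤ log |t| := log_le_log (by linarith) hst
  rw [abs_mul, abs_of_nonneg ((log_nonneg hs).trans hlog)]
  exact mul_le_mul hst hlog (log_nonneg hs) (abs_nonneg t)

lemma abs_le_mul_sq_add_inv {y c : ℝ} (hc : 0 < c) : |y| ≤ c * y ^ 2 + 1 / (4 * c) := by
  rw [← sq_abs y, ← sub_nonneg]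
  have : c * |y| ^ 2 + 1 / (4 * c) - |y| = (2 * c * |y| - 1) ^ 2 / (4 * c) := by
    field_simp; ring
  rw [this]
  positivity

lemma exists_Icc_subset_mem {a b x δ : ℝ} (hx : x ∈ Icc a b) (hδ0 : 0 ≤ δ) (hδ : δ ≤ b - a) :
    ∃ u, a ≤ u ∧ u + δ ≤ b ∧ x ∈ Icc u (u + δ) := by
  refine ⟨min x (b - δ), le_min hx.1 (by linarith), by linarith [min_le_right x (b - δ)],
    min_le_left _ _, ?_⟩
  rcases min_cases x (b - δ) with ⟨h, -⟩ | ⟨h, -⟩ <;> rw [h] <;> linarith [hx.2]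

lemma Continuous.abs_mul_log_abs {f : ℝ → ℝ} (hf : Continuous f) :
    Continuous fun x => |f x * Real.log (|f x|)| := by
  simpa only [log_abs] using hf.mul_log.abs

section

variable {a b : ℝ} {f : ℝ → ℝ}

lemma integral_abs_le_mul_integral_sq_add {g : ℝ → ℝ} (hg : Continuous g) (hab : a ≤ b) {c : ℝ}
    (hc : 0 < c) : ∫ t in a..b, |g t| ≤ c * (∫ t in a..b, g t ^ 2) + (b - a) / (4 * c) := by
  calc ∫ t in a..b, |g t| ≤ ∫ t in a..b, (c * g t ^ 2 + 1 / (4 * c)) :=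
        intervalIntegral.integral_mono_on hab (hg.abs.intervalIntegrable a b)
          ((continuous_const.mul (hg.pow 2)).add continuous_const |>.intervalIntegrable a b)
          fun t _ => abs_le_mul_sq_add_inv hc
    _ = c * (∫ t in a..b, g t ^ 2) + (b - a) / (4 * c) := by
      have hg2 : IntervalIntegrable (fun t => c * g t ^ 2) volume a b :=
        ((hg.pow 2).intervalIntegrable a b).const_mul c
      rw [intervalIntegral.integral_add hg2 intervalIntegrable_const,
        intervalIntegral.integral_const_mul, intervalIntegral.integral_const, smul_eq_mul,
        mul_one_div]

lemma abs_sub_le_integral_abs_deriv (hf : ContDiff ℝ 1 f) {x y : ℝ}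
    (hx : x ∈ Icc a b) (hy : y ∈ Icc a b) : |f x - f y| ≤ ∫ t in a..b, |deriv f t| := by
  have hf' := hf.continuous_deriv le_rfl
  rw [← intervalIntegral.integral_deriv_eq_sub
    (fun t _ => (hf.differentiable one_ne_zero).differentiableAt) (hf'.intervalIntegrable y x)]
  refine (intervalIntegral.norm_integral_le_abs_integral_norm (f := deriv f) (μ := volume)).trans ?_
  refine (intervalIntegral.abs_integral_mono_interval ?_ (.of_forall fun t => norm_nonneg _)
    (hf'.norm.intervalIntegrable a b)).trans_eq ?_
  · exact uIoc_subset_uIoc_of_uIcc_subset_uIcc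
      (uIcc_subset_uIcc (mem_uIcc_of_le hy.1 hy.2) (mem_uIcc_of_le hx.1 hx.2))
  · exact abs_of_nonneg
      (intervalIntegral.integral_nonneg (hx.1.trans hx.2) fun t _ => norm_nonneg _)

lemma mul_le_integral_of_le_on_Icc {g : ℝ → ℝ} (hg : Continuous g) (hg0 : ∀ x, 0 ≤ g x)
    {u δ m : ℝ} (hau : a ≤ u) (hδ : 0 ≤ δ) (hub : u + δ ≤ b)
    (hm : ∀ x ∈ Icc u (u + δ), m ≤ g x) : δ * m ≤ ∫ x in a..b, g x := by
  calc δ * m = ∫ _ in u..u + δ, m := by simp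
    _ ≤ ∫ x in u..u + δ, g x :=
      intervalIntegral.integral_mono_on (by linarith) intervalIntegrable_const
        (hg.intervalIntegrable _ _) hm
    _ ≤ ∫ x in a..b, g x :=
      intervalIntegral.integral_mono_interval hau (by linarith) hub (.of_forall hg0)
        (hg.intervalIntegrable a b)

lemma exists_Icc_half_le_abs (hf : ContDiff ℝ 1 f) {x₀ δ : ℝ} (hx₀ : x₀ ∈ Icc a b)
    (hδ0 : 0 < δ) (hδ : δ ≤ b - a) (hfx₀ : 0 < |f x₀|)
    (hD : δ * ∫ t in a..b, deriv f t ^ 2 ≤ |f x₀| ^ 2 / 4) :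
    ∃ u, a ≤ u ∧ u + δ ≤ b ∧ ∀ x ∈ Icc u (u + δ), |f x₀| / 2 ≤ |f x| := by
  obtain ⟨u, hau, hub, hx₀u⟩ := exists_Icc_subset_mem hx₀ hδ0.le hδ
  refine ⟨u, hau, hub, fun x hx => ?_⟩
  set S := |f x₀|
  have hf' := hf.continuous_deriv le_rfl
  have hsub : ∫ t in u..u + δ, deriv f t ^ 2 ≤ ∫ t in a..b, deriv f t ^ 2 :=
    intervalIntegral.integral_mono_interval hau (by linarith) hub
      (.of_forall fun t => sq_nonneg _) ((hf'.pow 2).intervalIntegrable a b)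
  have hvar : |f x - f x₀| ≤ S / 2 := by
    calc |f x - f x₀| ≤ ∫ t in u..u + δ, |deriv f t| := abs_sub_le_integral_abs_deriv hf hx hx₀u
      _ ≤ δ / S * (∫ t in u..u + δ, deriv f t ^ 2) + (u + δ - u) / (4 * (δ / S)) :=
        integral_abs_le_mul_integral_sq_add hf' (by linarith) (by positivity)
      _ ≤ δ / S * (∫ t in a..b, deriv f t ^ 2) + S / 4 := by
        have hquarter : (u + δ - u) / (4 * (δ / S)) = S / 4 := by
          rw [add_sub_cancel_left]
          field_simp
        rw [hquarter]
        gcongr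
      _ ≤ S / 2 := by
        have : δ / S * (∫ t in a..b, deriv f t ^ 2) ≤ S / 4 := by
          rw [div_mul_eq_mul_div, div_le_iff₀ hfx₀]
          linarith
        linarith
  linarith [abs_sub_abs_le_abs_sub (f x₀) (f x), abs_sub_comm (f x₀) (f x)]

lemma mul_log_le_integral_mul_integral (hf : ContDiff ℝ 1 f) (hab : a < b) {x₀ : ℝ}
    (hx₀ : x₀ ∈ Icc a b) (hfx₀ : 2 ≤ |f x₀|) :
    min 1 ((b - a) ^ 2) / 8 * (|f x₀| ^ 3 * log (|f x₀| / 2)) ≤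
      (∫ x in a..b, (deriv f x ^ 2 + f x ^ 2)) * ∫ x in a..b, |f x * log (|f x|)| := by
  set S := |f x₀|
  set D := ∫ t in a..b, deriv f t ^ 2
  set H := ∫ x in a..b, (deriv f x ^ 2 + f x ^ 2)
  set L := ∫ x in a..b, |f x * log (|f x|)|
  have hS : 0 < S := by linarith
  have hlog : 0 ≤ log (S / 2) := log_nonneg (by linarith)
  have hf' := hf.continuous_deriv le_rfl
  have hH : 0 ≤ H := intervalIntegral.integral_nonneg hab.le fun x _ => by positivity
  have hDH : D ≤ H := intervalIntegral.integral_mono_on hab.le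
    ((hf'.pow 2).intervalIntegrable a b)
    (((hf'.pow 2).add (hf.continuous.pow 2)).intervalIntegrable a b)
    fun x _ => le_add_of_nonneg_right (sq_nonneg (f x))
  have hLlow : ∀ {u δ}, a ≤ u → 0 ≤ δ → u + δ ≤ b → (∀ x ∈ Icc u (u + δ), S / 2 ≤ |f x|) →
      δ * (S / 2 * log (S / 2)) ≤ L := fun hau hδ hub hplat =>
    mul_le_integral_of_le_on_Icc hf.continuous.abs_mul_log_abs
      (fun _ => abs_nonneg _) hau hδ hub
      fun x hx => mul_log_le_abs_mul_log_abs (by linarith) (hplat x hx)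
  rcases le_or_gt ((b - a) * D) (S ^ 2 / 4) with hsmall | hlarge
  · obtain ⟨u, hau, hub, hplat⟩ := exists_Icc_half_le_abs hf hx₀ (sub_pos.2 hab) le_rfl hS hsmall
    have hHlow : (b - a) * (S / 2) ^ 2 ≤ H :=
      mul_le_integral_of_le_on_Icc (g := fun x => deriv f x ^ 2 + f x ^ 2)
        ((hf'.pow 2).add (hf.continuous.pow 2)) (fun x => by positivity)
        hau (sub_pos.2 hab).le hub fun x hx => by
          nlinarith [hplat x hx, sq_abs (f x), sq_nonneg (deriv f x)]
    calc min 1 ((b - a) ^ 2) / 8 * (S ^ 3 * log (S / 2))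
        ≤ (b - a) ^ 2 / 8 * (S ^ 3 * log (S / 2)) := by gcongr; exact min_le_right _ _
      _ = ((b - a) * (S / 2) ^ 2) * ((b - a) * (S / 2 * log (S / 2))) := by ring
      _ ≤ H * L := mul_le_mul hHlow (hLlow hau (sub_pos.2 hab).le hub hplat)
          (mul_nonneg (sub_pos.2 hab).le (by positivity)) hH
  · have hD : 0 < D := pos_of_mul_pos_right (hlarge.trans' (by positivity)) (sub_pos.2 hab).le
    set δ := S ^ 2 / (4 * D) with hδ
    have hδD : δ * D = S ^ 2 / 4 := by
      rw [hδ]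
      field_simp
    obtain ⟨u, hau, hub, hplat⟩ := exists_Icc_half_le_abs hf hx₀ (by positivity)
      (le_of_mul_le_mul_right (hδD.trans_lt hlarge).le hD) hS hδD.le
    calc min 1 ((b - a) ^ 2) / 8 * (S ^ 3 * log (S / 2))
        ≤ 1 / 8 * (S ^ 3 * log (S / 2)) := by gcongr; exact min_le_left _ _
      _ = D * (δ * (S / 2 * log (S / 2))) := by
        linear_combination (-(S / 2 * log (S / 2))) * hδD
      _ ≤ H * L := mul_le_mul hDH (hLlow hau (by positivity) hub hplat) (by positivity) hH

lemma integral_pow_four_le_pow_three_mul (hf : Continuous f) (hab : a ≤ b) {K : ℝ}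
    (hK : ∀ x ∈ Icc a b, |f x| ≤ K) :
    ∫ x in a..b, f x ^ 4 ≤ K ^ 3 * ∫ x in a..b, |f x| := by
  rw [← intervalIntegral.integral_const_mul]
  exact intervalIntegral.integral_mono_on hab ((hf.pow 4).intervalIntegrable a b)
    ((continuous_const.mul hf.abs).intervalIntegrable (μ := volume) a b)
    fun x hx => pow_four_le_pow_three_mul_abs (hK x hx)

lemma integral_pow_four_le_exp_add (hf : Continuous f) (hab : a ≤ b) {S T : ℝ} (hT : 0 < T)
    (hS : ∀ x ∈ Icc a b, |f x| ≤ S) :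
    ∫ x in a..b, f x ^ 4 ≤
      exp T ^ 3 * (∫ x in a..b, |f x|) + S ^ 3 / T * ∫ x in a..b, |f x * log (|f x|)| := by
  have hI := (hf.abs.intervalIntegrable (μ := volume) a b).const_mul (exp T ^ 3)
  have hL := (hf.abs_mul_log_abs.intervalIntegrable (μ := volume) a b).const_mul (S ^ 3 / T)
  rw [← intervalIntegral.integral_const_mul, ← intervalIntegral.integral_const_mul,
    ← intervalIntegral.integral_add hI hL]
  exact intervalIntegral.integral_mono_on hab ((hf.pow 4).intervalIntegrable a b) (hI.add hL)
    fun x hx => pow_four_le_exp_add_mul_log hT (hS x hx)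

lemma pow_three_div_le_mul_integral_mul_integral (hf : ContDiff ℝ 1 f) (hab : a < b) {x₀ : ℝ}
    (hx₀ : x₀ ∈ Icc a b) {ε T : ℝ} (hT : 0 < T)
    (hεT : 1 ≤ ε * (min 1 ((b - a) ^ 2) / 8) * T ^ 2) (hfx₀ : 2 * exp T < |f x₀|) :
    |f x₀| ^ 3 / T ≤
      ε * (∫ x in a..b, (deriv f x ^ 2 + f x ^ 2)) * ∫ x in a..b, |f x * log (|f x|)| := by
  set c := min 1 ((b - a) ^ 2) / 8
  set S := |f x₀|
  have hc : 0 < c := div_pos (lt_min one_pos (pow_pos (sub_pos.2 hab) 2)) (by norm_num)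
  have hεT0 : 0 < ε * T := pos_of_mul_pos_left (a := ε * T) (b := c * T)
    (by linarith [show ε * c * T ^ 2 = ε * T * (c * T) by ring]) (by positivity)
  have hS : 2 ≤ S := by linarith [add_one_le_exp T]
  have hlog : T ≤ log (S / 2) := ((lt_log_iff_exp_lt (by positivity)).2 (by linarith)).le
  rw [div_le_iff₀ hT]
  calc S ^ 3 ≤ ε * c * T ^ 2 * S ^ 3 := le_mul_of_one_le_left (by positivity) hεT
    _ = ε * T * (c * (S ^ 3 * T)) := by ring
    _ ≤ ε * T * (c * (S ^ 3 * log (S / 2))) := by gcongr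
    _ ≤ ε * T * ((∫ x in a..b, (deriv f x ^ 2 + f x ^ 2)) * ∫ x in a..b, |f x * log (|f x|)|) :=
      mul_le_mul_of_nonneg_left (mul_log_le_integral_mul_integral hf hab hx₀ hS) hεT0.le
    _ = _ := by ring

end

/-- Modified Gagliardo–Nirenberg inequality in dimension one (Lemma 2.2, case d = 1):
for all `a < b` and `ε > 0` there is `C_ε > 0` such that for every `C¹` function `f : ℝ → ℝ`,
`∫_a^b f⁴ ≤ ε ‖f‖_{H¹(a,b)}² ‖f log|f|‖_{L¹(a,b)}² + C_ε ‖f‖_{L¹(a,b)}`. -/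
theorem modified_gagliardo_nirenberg_dim_one (a b : ℝ) (hab : a < b) (ε : ℝ) (hε : 0 < ε) :
    ∃ C : ℝ, 0 < C ∧ ∀ f : ℝ → ℝ, ContDiff ℝ 1 f →
      (∫ x in a..b, f x ^ 4) ≤
        ε * (∫ x in a..b, (deriv f x ^ 2 + f x ^ 2)) *
          (∫ x in a..b, |f x * Real.log (|f x|)|) ^ 2
        + C * ∫ x in a..b, |f x| := by
  set c := min 1 ((b - a) ^ 2) / 8
  have hc : 0 < c := div_pos (lt_min one_pos (pow_pos (sub_pos.2 hab) 2)) (by norm_num)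
  set T := 1 + 1 / (ε * c) with hT_def
  have hT : 1 ≤ T := le_add_of_nonneg_right (by positivity)
  have hεT : 1 ≤ ε * c * T ^ 2 := by
    have : ε * c * T = ε * c + 1 := by rw [hT_def]; field_simp
    nlinarith [mul_pos hε hc]
  refine ⟨(2 * exp T) ^ 3, by positivity, fun f hf => ?_⟩
  obtain ⟨x₀, hx₀, hmax⟩ :=
    isCompact_Icc.exists_isMaxOn (nonempty_Icc.2 hab.le) hf.continuous.abs.continuousOn
  have hI : 0 ≤ ∫ x in a..b, |f x| :=
    intervalIntegral.integral_nonneg hab.le fun _ _ => abs_nonneg _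
  have hL : 0 ≤ ∫ x in a..b, |f x * log (|f x|)| :=
    intervalIntegral.integral_nonneg hab.le fun _ _ => abs_nonneg _
  rcases le_or_gt |f x₀| (2 * exp T) with hsmall | hlarge
  · calc ∫ x in a..b, f x ^ 4 ≤ (2 * exp T) ^ 3 * ∫ x in a..b, |f x| :=
          integral_pow_four_le_pow_three_mul hf.continuous hab.le fun x hx => (hmax hx).trans hsmall
      _ ≤ _ := le_add_of_nonneg_left (mul_nonneg (mul_nonneg hε.le
          (intervalIntegral.integral_nonneg hab.le fun _ _ => by positivity)) (sq_nonneg _))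
  calc ∫ x in a..b, f x ^ 4
      ≤ exp T ^ 3 * (∫ x in a..b, |f x|) + |f x₀| ^ 3 / T * ∫ x in a..b, |f x * log (|f x|)| :=
        integral_pow_four_le_exp_add hf.continuous hab.le (by linarith) fun x hx => hmax hx
    _ ≤ (2 * exp T) ^ 3 * (∫ x in a..b, |f x|) +
          ε * (∫ x in a..b, (deriv f x ^ 2 + f x ^ 2)) * (∫ x in a..b, |f x * log (|f x|)|) *
            ∫ x in a..b, |f x * log (|f x|)| := by
        gcongr
        · linarith [exp_pos T]
        · exact pow_three_div_le_mul_integral_mul_integral hf hab hx₀ (by linarith) hεT hlarge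
    _ = _ := by ring
end

section
/- Modified Gagliardo–Nirenberg inequality in dimension two, whole-space version (Lemma 2.2, case d = 2): for every ε > 0 there exists a constant C_ε > 0 such that for every compactly supported continuously differentiable function f : ℝ² → ℝ one has ∫_{ℝ²} |f(x)|³ dx ≤ ε · (∫_{ℝ²} (‖∇f(x)‖² + f(x)²) dx) · (∫_{ℝ²} |f(x) · log |f(x)|| dx) + C_ε · ∫_{ℝ²} |f(x)| dx. -/
open MeasureTheory Measure Real Module Filter

/-! Truncate `f` at height `M`, `g = (|f| - M)₊`. Although `g` is only Lipschitz, `g²` is `C¹` with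
`‖∇(g²)‖ ≤ 2 g ‖∇f‖`, so the `L¹`-Sobolev inequality `‖u‖₂ ≤ C ‖∇u‖₁` of the plane applied to
`u = g²`, together with two Cauchy–Schwarz steps, gives `∫ g³ ≤ 4 C ∫ g ∫ ‖∇f‖²`.
Pointwise `|f|³ ≤ 8 g³ + 4 M² |f|` and `log M · g ≤ |f log |f||`, hence
`∫ |f|³ ≤ (32 C / log M) ∫ ‖∇f‖² ∫ |f log |f|| + 4 M² ∫ |f|`, and `log M = 32 C / ε` works. -/

theorem sq_integral_mul_le_integral_sq_mul_integral_sq {α : Type*} [MeasurableSpace α]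
    {μ : Measure α} {a b : α → ℝ} (ha : MemLp a 2 μ) (hb : MemLp b 2 μ) :
    (∫ x, a x * b x ∂μ) ^ 2 ≤ (∫ x, a x ^ 2 ∂μ) * ∫ x, b x ^ 2 ∂μ := by
  have hab : Integrable (fun x => a x * b x) μ := ha.integrable_mul hb
  have hquad (t : ℝ) : 0 ≤ (∫ x, b x ^ 2 ∂μ) * (t * t) + 2 * (∫ x, a x * b x ∂μ) * t
      + ∫ x, a x ^ 2 ∂μ := by
    calc 0 ≤ ∫ x, (a x + t * b x) ^ 2 ∂μ := integral_nonneg fun x => sq_nonneg _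
      _ = ∫ x, (a x ^ 2 + 2 * t * (a x * b x)) + t * t * b x ^ 2 ∂μ := by
        congr 1 with x; ring
      _ = _ := by
        rw [integral_add (ha.integrable_sq.fun_add (hab.const_mul _))
          (hb.integrable_sq.const_mul _), integral_add ha.integrable_sq (hab.const_mul _),
          integral_const_mul, integral_const_mul]
        ring
  have hdisc := discrim_le_zero hquad
  rw [discrim] at hdisc
  linarith

theorem Continuous.integrable_comp_of_hasCompactSupport {X F : Type*} [TopologicalSpace X]
    [MeasurableSpace X] [OpensMeasurableSpace X] {μ : Measure X} [IsFiniteMeasureOnCompacts μ]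
    [NormedAddCommGroup F] {f : X → F} (hf : Continuous f) (hfs : HasCompactSupport f)
    {φ : F → ℝ} (hφ : Continuous φ) (hφ0 : φ 0 = 0) : Integrable (fun x => φ (f x)) μ :=
  (hφ.comp hf).integrable_of_hasCompactSupport (hfs.comp_left hφ0)

theorem sq_integral_sq_le_integral_pow_three_mul_integral {X : Type*} [TopologicalSpace X]
    [MeasurableSpace X] [OpensMeasurableSpace X] {μ : Measure X} [IsFiniteMeasureOnCompacts μ]
    {g : X → ℝ} (hg : Continuous g) (hgs : HasCompactSupport g) (hg0 : 0 ≤ g) :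
    (∫ x, g x ^ 2 ∂μ) ^ 2 ≤ (∫ x, g x ^ 3 ∂μ) * ∫ x, g x ∂μ := by
  have hsqrt : MemLp (fun x => √(g x)) 2 μ :=
    (continuous_sqrt.comp hg).memLp_of_hasCompactSupport (hgs.comp_left sqrt_zero)
  have hmul : MemLp (fun x => g x * √(g x)) 2 μ :=
    (hg.mul (continuous_sqrt.comp hg)).memLp_of_hasCompactSupport (hgs.mul_right)
  convert sq_integral_mul_le_integral_sq_mul_integral_sq hmul hsqrt using 3 <;> funext x <;>
    simp only [mul_pow, mul_assoc, mul_self_sqrt (hg0 x), sq_sqrt (hg0 x)] <;> ring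

section Sobolev

variable {E : Type*} [NormedAddCommGroup E] [NormedSpace ℝ E] [MeasurableSpace E] [BorelSpace E]
  [FiniteDimensional ℝ E] {μ : Measure E} [IsAddHaarMeasure μ]

theorem integral_sq_le_mul_sq_integral_norm_fderiv (hE : finrank ℝ E = 2) {u : E → ℝ}
    (hu : ContDiff ℝ 1 u) (h2u : HasCompactSupport u) :
    ∫ x, u x ^ 2 ∂μ ≤
      lintegralPowLePowLIntegralFDerivConst μ 2 * (∫ x, ‖fderiv ℝ u x‖ ∂μ) ^ 2 := by
  have hp : HolderConjugate (finrank ℝ E) 2 := by rw [hE]; exact .two_two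
  have hsob := lintegral_pow_le_pow_lintegral_fderiv μ hu h2u hp
  have hu2 : Integrable (fun x => u x ^ 2) μ :=
    hu.continuous.integrable_comp_of_hasCompactSupport h2u (continuous_pow 2)
      (zero_pow two_ne_zero)
  have hdu : Integrable (fun x => ‖fderiv ℝ u x‖) μ :=
    (hu.continuous_fderiv one_ne_zero).integrable_comp_of_hasCompactSupport
      (h2u.fderiv (𝕜 := ℝ)) continuous_norm norm_zero
  rw [← ENNReal.ofReal_le_ofReal_iff (by positivity), ENNReal.ofReal_mul (by positivity),
    ENNReal.ofReal_pow (integral_nonneg fun _ => norm_nonneg _),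
    ofReal_integral_eq_lintegral_ofReal hu2 (ae_of_all _ fun _ => sq_nonneg _),
    ofReal_integral_eq_lintegral_ofReal hdu (ae_of_all _ fun _ => norm_nonneg _)]
  simp only [ENNReal.rpow_two, ENNReal.ofReal_coe_nnreal, ofReal_norm] at hsob ⊢
  convert hsob using 3 with x
  rw [← sq_abs, ENNReal.ofReal_pow (abs_nonneg _), ← Real.norm_eq_abs, ofReal_norm]

theorem integral_pow_three_le_of_norm_fderiv_sq_le (hE : finrank ℝ E = 2) {g G : E → ℝ}
    (hg : Continuous g) (hgs : HasCompactSupport g) (hg0 : 0 ≤ g) (hG : MemLp G 2 μ)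
    (hg2 : ContDiff ℝ 1 (fun x => g x ^ 2))
    (hdg2 : ∀ x, ‖fderiv ℝ (fun x => g x ^ 2) x‖ ≤ 2 * g x * G x) :
    ∫ x, g x ^ 3 ∂μ ≤
      4 * lintegralPowLePowLIntegralFDerivConst μ 2 * (∫ x, g x ∂μ) * ∫ x, G x ^ 2 ∂μ := by
  set C : ℝ := (lintegralPowLePowLIntegralFDerivConst μ 2 : ℝ)
  have hg2s : HasCompactSupport (fun x => g x ^ 2) := hgs.comp_left (zero_pow two_ne_zero)
  have hgL2 : MemLp g 2 μ := hg.memLp_of_hasCompactSupport hgs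
  have hsob : ∫ x, (g x ^ 2) ^ 2 ∂μ ≤ 4 * C * (∫ x, g x ^ 2 ∂μ) * ∫ x, G x ^ 2 ∂μ :=
    calc ∫ x, (g x ^ 2) ^ 2 ∂μ ≤ C * (∫ x, ‖fderiv ℝ (fun x => g x ^ 2) x‖ ∂μ) ^ 2 :=
          integral_sq_le_mul_sq_integral_norm_fderiv hE hg2 hg2s
      _ ≤ C * (2 * ∫ x, g x * G x ∂μ) ^ 2 := by
          refine mul_le_mul_of_nonneg_left (pow_le_pow_left₀
            (integral_nonneg fun x => norm_nonneg _) ?_ 2) (NNReal.coe_nonneg _)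
          rw [← integral_const_mul]
          refine integral_mono ?_ ((hgL2.integrable_mul hG).const_mul 2) fun x => ?_
          · exact (hg2.continuous_fderiv one_ne_zero).integrable_comp_of_hasCompactSupport
              (hg2s.fderiv (𝕜 := ℝ)) continuous_norm norm_zero
          · simpa only [mul_assoc] using hdg2 x
      _ ≤ 4 * C * (∫ x, g x ^ 2 ∂μ) * ∫ x, G x ^ 2 ∂μ := by
          have hcs := sq_integral_mul_le_integral_sq_mul_integral_sq hgL2 hG
          nlinarith [NNReal.coe_nonneg (lintegralPowLePowLIntegralFDerivConst μ 2)]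
  have hcube : (∫ x, g x ^ 3 ∂μ) ^ 2 ≤ (∫ x, (g x ^ 2) ^ 2 ∂μ) * ∫ x, g x ^ 2 ∂μ := by
    convert sq_integral_mul_le_integral_sq_mul_integral_sq
      (hg2.continuous.memLp_of_hasCompactSupport hg2s) hgL2 using 3
    funext x
    ring
  have hinterp := sq_integral_sq_le_integral_pow_three_mul_integral (μ := μ) hg hgs hg0
  have hK : 0 ≤ 4 * C * ∫ x, G x ^ 2 ∂μ :=
    mul_nonneg (by positivity) (integral_nonneg fun x => sq_nonneg _)
  have hA : 0 ≤ ∫ x, g x ^ 3 ∂μ := integral_nonneg fun x => pow_nonneg (hg0 x) 3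
  have hB : 0 ≤ ∫ x, g x ^ 2 ∂μ := integral_nonneg fun x => sq_nonneg _
  rcases hA.eq_or_lt with hA0 | hApos
  · rw [← hA0]
    exact mul_nonneg (mul_nonneg (by positivity) (integral_nonneg hg0))
      (integral_nonneg fun x => sq_nonneg _)
  refine le_of_mul_le_mul_right ?_ hApos
  calc (∫ x, g x ^ 3 ∂μ) * ∫ x, g x ^ 3 ∂μ = (∫ x, g x ^ 3 ∂μ) ^ 2 := by ring
      _ ≤ (∫ x, (g x ^ 2) ^ 2 ∂μ) * ∫ x, g x ^ 2 ∂μ := hcube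
      _ ≤ (4 * C * ∫ x, G x ^ 2 ∂μ) * (∫ x, g x ^ 2 ∂μ) ^ 2 := by nlinarith
      _ ≤ (4 * C * ∫ x, G x ^ 2 ∂μ) * ((∫ x, g x ^ 3 ∂μ) * ∫ x, g x ∂μ) := by gcongr
      _ = 4 * C * (∫ x, g x ∂μ) * (∫ x, G x ^ 2 ∂μ) * ∫ x, g x ^ 3 ∂μ := by ring

end Sobolev

theorem hasDerivAt_max_zero_sq (s : ℝ) : HasDerivAt (fun s => max s 0 ^ 2) (2 * max s 0) s := by
  rcases lt_trichotomy s 0 with hs | rfl | hs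
  · rw [max_eq_right hs.le, mul_zero]
    refine (hasDerivAt_const s (0 : ℝ)).congr_of_eventuallyEq ?_
    filter_upwards [eventually_lt_nhds hs] with t ht
    simp [max_eq_right ht.le]
  · rw [max_self, mul_zero, hasDerivAt_iff_isLittleO_nhds_zero]
    simp only [zero_add, max_self, zero_pow two_ne_zero, sub_zero, smul_zero]
    refine (Asymptotics.IsBigO.of_bound 1 (Eventually.of_forall fun h => ?_)).trans_isLittleO
      (Asymptotics.isLittleO_pow_id one_lt_two)
    rw [one_mul, norm_pow, norm_pow]
    exact pow_le_pow_left₀ (norm_nonneg _) (abs_max_le_max_abs_abs.trans (by simp)) 2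
  · rw [max_eq_left hs.le]
    refine (by simpa [mul_comm] using hasDerivAt_pow 2 s : HasDerivAt (fun t : ℝ => t ^ 2) _ s)
      |>.congr_of_eventuallyEq ?_
    filter_upwards [eventually_gt_nhds hs] with t ht
    simp [max_eq_left ht.le]

theorem contDiff_max_zero_sq : ContDiff ℝ 1 (fun s : ℝ => max s 0 ^ 2) := by
  rw [contDiff_one_iff_deriv]
  refine ⟨fun s => (hasDerivAt_max_zero_sq s).differentiableAt, ?_⟩
  rw [funext fun s => (hasDerivAt_max_zero_sq s).deriv]
  fun_prop

noncomputable def absExcess (M t : ℝ) : ℝ := max (|t| - M) 0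

namespace absExcess

variable {M : ℝ}

theorem nonneg (M t : ℝ) : 0 ≤ absExcess M t := le_max_right _ _

theorem le_abs (hM : 0 ≤ M) (t : ℝ) : absExcess M t ≤ |t| :=
  max_le (by linarith) (abs_nonneg t)

theorem eq_zero_of_abs_le {t : ℝ} (h : |t| ≤ M) : absExcess M t = 0 :=
  max_eq_right (by linarith)

theorem map_zero (hM : 0 ≤ M) : absExcess M 0 = 0 :=
  eq_zero_of_abs_le (abs_zero.trans_le hM)

theorem continuous (M : ℝ) : Continuous (absExcess M) := by
  unfold absExcess; fun_prop

theorem sq_eq (hM : 0 ≤ M) (t : ℝ) :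
    absExcess M t ^ 2 = max (t - M) 0 ^ 2 + max (-t - M) 0 ^ 2 := by
  rcases le_total 0 t with ht | ht
  · rw [absExcess, abs_of_nonneg ht, max_eq_right (a := -t - M) (by linarith)]
    ring
  · rw [absExcess, abs_of_nonpos ht, max_eq_right (a := t - M) (by linarith)]
    ring

theorem hasDerivAt_sq (hM : 0 ≤ M) (t : ℝ) :
    HasDerivAt (fun t => absExcess M t ^ 2) (2 * max (t - M) 0 - 2 * max (-t - M) 0) t := by
  have hright := (hasDerivAt_max_zero_sq (t - M)).comp t ((hasDerivAt_id t).sub_const M)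
  have hleft := (hasDerivAt_max_zero_sq (-t - M)).comp t ((hasDerivAt_neg t).sub_const M)
  rw [funext (sq_eq hM)]
  exact (hright.add hleft).congr_deriv (by ring)

theorem contDiff_sq (hM : 0 ≤ M) : ContDiff ℝ 1 (fun t => absExcess M t ^ 2) := by
  rw [funext (sq_eq hM)]
  exact (contDiff_max_zero_sq.comp (contDiff_id.sub contDiff_const)).add
    (contDiff_max_zero_sq.comp (contDiff_neg.sub contDiff_const))

theorem abs_deriv_sq (hM : 0 ≤ M) (t : ℝ) :
    |2 * max (t - M) 0 - 2 * max (-t - M) 0| = 2 * absExcess M t := by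
  rcases le_total 0 t with ht | ht
  · rw [absExcess, abs_of_nonneg ht, max_eq_right (a := -t - M) (by linarith), mul_zero, sub_zero,
      abs_of_nonneg (by positivity)]
  · rw [absExcess, abs_of_nonpos ht, max_eq_right (a := t - M) (by linarith), mul_zero, zero_sub,
      abs_neg, abs_of_nonneg (by positivity)]

theorem norm_fderiv_sq_comp_le {E : Type*} [NormedAddCommGroup E] [NormedSpace ℝ E] (hM : 0 ≤ M)
    {f : E → ℝ} {x : E} (hf : DifferentiableAt ℝ f x) :
    ‖fderiv ℝ (fun x => absExcess M (f x) ^ 2) x‖ ≤ 2 * absExcess M (f x) * ‖fderiv ℝ f x‖ := by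
  have hcomp : HasFDerivAt (fun x => absExcess M (f x) ^ 2) _ x :=
    (hasDerivAt_sq hM (f x)).comp_hasFDerivAt x hf.hasFDerivAt
  rw [hcomp.fderiv, norm_smul, Real.norm_eq_abs, abs_deriv_sq hM]

theorem abs_pow_three_le (hM : 0 ≤ M) (t : ℝ) :
    |t| ^ 3 ≤ 8 * absExcess M t ^ 3 + 4 * M ^ 2 * |t| := by
  have h0 := nonneg M t
  rcases le_total |t| (2 * M) with ht | ht
  · have hsmall : |t| ^ 3 ≤ (2 * M) ^ 2 * |t| := by
      rw [pow_succ]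
      exact mul_le_mul_of_nonneg_right (pow_le_pow_left₀ (abs_nonneg t) ht 2) (abs_nonneg t)
    nlinarith [pow_nonneg h0 3]
  · have hlarge : |t| ≤ 2 * absExcess M t := by
      rw [absExcess, max_eq_left (by linarith)]; linarith
    nlinarith [abs_nonneg t, pow_le_pow_left₀ (abs_nonneg t) hlarge 3]

theorem log_mul_le (hM : 1 ≤ M) (t : ℝ) : log M * absExcess M t ≤ |t * log (|t|)| := by
  rcases le_total |t| M with ht | ht
  · rw [eq_zero_of_abs_le ht, mul_zero]; exact abs_nonneg _
  · have hlog : log M ≤ log |t| := log_le_log (by linarith) ht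
    rw [abs_mul, abs_of_nonneg (hlog.trans' (log_nonneg hM)), mul_comm]
    exact mul_le_mul (le_abs (by linarith) t) hlog (log_nonneg hM) (abs_nonneg t)

variable {X : Type*} [TopologicalSpace X] [MeasurableSpace X] [OpensMeasurableSpace X]
  {μ : Measure X} [IsFiniteMeasureOnCompacts μ] {f : X → ℝ}

theorem integral_abs_pow_three_le (hM : 0 ≤ M) (hf : Continuous f) (hfs : HasCompactSupport f) :
    ∫ x, |f x| ^ 3 ∂μ ≤ 8 * (∫ x, absExcess M (f x) ^ 3 ∂μ) + 4 * M ^ 2 * ∫ x, |f x| ∂μ := by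
  have hg3 : Integrable (fun x => absExcess M (f x) ^ 3) μ :=
    hf.integrable_comp_of_hasCompactSupport hfs ((continuous M).pow 3) (by simp [map_zero hM])
  have hf1 : Integrable (fun x => |f x|) μ :=
    hf.integrable_comp_of_hasCompactSupport hfs continuous_abs abs_zero
  rw [← integral_const_mul, ← integral_const_mul,
    ← integral_add (hg3.const_mul _) (hf1.const_mul _)]
  exact integral_mono
    (hf.integrable_comp_of_hasCompactSupport hfs (continuous_abs.pow 3) (by simp))
    ((hg3.const_mul _).add (hf1.const_mul _)) fun x => abs_pow_three_le hM (f x)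

theorem log_mul_integral_le (hM : 1 ≤ M) (hf : Continuous f) (hfs : HasCompactSupport f) :
    log M * ∫ x, absExcess M (f x) ∂μ ≤ ∫ x, |f x * log (|f x|)| ∂μ := by
  rw [← integral_const_mul]
  refine integral_mono ?_ ?_ fun x => log_mul_le hM (f x)
  · exact (hf.integrable_comp_of_hasCompactSupport hfs (continuous M)
      (map_zero (zero_le_one.trans hM))).const_mul _
  · simp_rw [log_abs]
    exact hf.integrable_comp_of_hasCompactSupport hfs continuous_mul_log.abs (by simp)

end absExcess

/-- Modified Gagliardo–Nirenberg inequality in dimension two, whole-space version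
(Lemma 2.2, case d = 2): for every `ε > 0` there is `C_ε > 0` such that for every
compactly supported `C¹` function `f : ℝ² → ℝ`,
`∫ |f|³ ≤ ε ‖f‖_{H¹}² ‖f log|f|‖_{L¹} + C_ε ‖f‖_{L¹}`. -/
theorem modified_gagliardo_nirenberg_dim_two (ε : ℝ) (hε : 0 < ε) :
    ∃ C : ℝ, 0 < C ∧ ∀ f : EuclideanSpace ℝ (Fin 2) → ℝ,
      ContDiff ℝ 1 f → HasCompactSupport f →
      (∫ x, |f x| ^ 3) ≤
        ε * (∫ x, (‖gradient f x‖ ^ 2 + f x ^ 2)) *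
          (∫ x, |f x * Real.log (|f x|)|)
        + C * ∫ x, |f x| := by
  set C₀ : ℝ :=
    (lintegralPowLePowLIntegralFDerivConst (volume : Measure (EuclideanSpace ℝ (Fin 2))) 2 : ℝ)
  set M := exp (32 * C₀ / ε)
  have hM : 1 ≤ M := one_le_exp (by positivity)
  have hM₀ : 0 ≤ M := zero_le_one.trans hM
  refine ⟨4 * M ^ 2, by positivity, fun f hf hfs => ?_⟩
  have hfc := hf.continuous
  have hf' : Continuous (fderiv ℝ f) := hf.continuous_fderiv one_ne_zero
  have hGN : ∫ x, absExcess M (f x) ^ 3 ≤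
      4 * C₀ * (∫ x, absExcess M (f x)) * ∫ x, ‖fderiv ℝ f x‖ ^ 2 :=
    integral_pow_three_le_of_norm_fderiv_sq_le finrank_euclideanSpace_fin
      ((absExcess.continuous M).comp hfc) (hfs.comp_left (absExcess.map_zero hM₀))
      (fun x => absExcess.nonneg M (f x))
      (hf'.norm.memLp_of_hasCompactSupport (hfs.fderiv (𝕜 := ℝ)).norm)
      ((absExcess.contDiff_sq hM₀).comp hf)
      (fun x => absExcess.norm_fderiv_sq_comp_le hM₀ (hf.differentiable one_ne_zero x))
  have hH1 : ∫ x, ‖fderiv ℝ f x‖ ^ 2 ≤ ∫ x, (‖gradient f x‖ ^ 2 + f x ^ 2) := by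
    simp_rw [gradient, LinearIsometryEquiv.norm_map]
    refine integral_mono ?_ ?_ fun x => le_add_of_nonneg_right (sq_nonneg (f x))
    · exact hf'.integrable_comp_of_hasCompactSupport (hfs.fderiv (𝕜 := ℝ))
        (continuous_norm.pow 2) (by simp)
    · exact (hf'.integrable_comp_of_hasCompactSupport (hfs.fderiv (𝕜 := ℝ))
        (continuous_norm.pow 2) (by simp)).add
        (hfc.integrable_comp_of_hasCompactSupport hfs (continuous_pow 2) (by simp))
  have hcube := absExcess.integral_abs_pow_three_le (μ := volume) hM₀ hfc hfs
  have hlog := absExcess.log_mul_integral_le (μ := volume) hM hfc hfs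
  calc ∫ x, |f x| ^ 3
      ≤ 8 * (∫ x, absExcess M (f x) ^ 3) + 4 * M ^ 2 * ∫ x, |f x| := hcube
    _ ≤ 32 * C₀ * (∫ x, absExcess M (f x)) * (∫ x, ‖fderiv ℝ f x‖ ^ 2)
        + 4 * M ^ 2 * ∫ x, |f x| := by linarith
    _ = ε * (log M * ∫ x, absExcess M (f x)) * (∫ x, ‖fderiv ℝ f x‖ ^ 2)
        + 4 * M ^ 2 * ∫ x, |f x| := by
      rw [log_exp]; field_simp
    _ ≤ ε * (∫ x, |f x * log (|f x|)|) * (∫ x, (‖gradient f x‖ ^ 2 + f x ^ 2))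
        + 4 * M ^ 2 * ∫ x, |f x| := by gcongr
    _ = _ := by ring
end

section
/- L¹-bound from an entropy bound (core estimate in the proof of Lemma 2.1): let (X, μ) be a finite measure space, let u : X → ℝ be measurable with u ≥ 0 almost everywhere, and suppose u and u · log u are integrable. Then for every K > 0 one has ∫_X u dμ ≤ (1/K) · ( ∫_X (u · log u − u + 1) dμ + (e^K − 1) · μ(X) ). -/
open MeasureTheory Real

/-! Pointwise Fenchel–Young inequality `K u ≤ (u log u − u + 1) + (e^K − 1)` for the convex
conjugate pair `u log u − u` and `e^K`, integrated over the finite measure space. -/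

/-- Obtained by multiplying `K - log u + 1 ≤ e^(K - log u)` by `u`. -/
lemma mul_le_mul_log_sub_add_exp {u : ℝ} (hu : 0 ≤ u) (K : ℝ) :
    K * u ≤ u * log u - u + exp K := by
  rcases hu.eq_or_lt with rfl | hu_pos
  · simpa using (exp_pos K).le
  have hexp : exp (K - log u) = exp K / u := by rw [exp_sub, exp_log hu_pos]
  have hyoung : u * (K - log u + 1) ≤ u * (exp K / u) := by
    rw [← hexp]
    exact mul_le_mul_of_nonneg_left (add_one_le_exp _) hu
  rw [mul_div_cancel₀ _ hu_pos.ne'] at hyoung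
  linarith

lemma mul_integral_le_integral_mul_log_add {X : Type*} [MeasurableSpace X] {μ : Measure X}
    [IsFiniteMeasure μ] {u : X → ℝ} (hu_nonneg : ∀ᵐ x ∂μ, 0 ≤ u x) (hu_int : Integrable u μ)
    (hulog_int : Integrable (fun x => u x * log (u x)) μ) (K : ℝ) :
    K * ∫ x, u x ∂μ ≤
      (∫ x, (u x * log (u x) - u x + 1) ∂μ) + (exp K - 1) * μ.real Set.univ := by
  have hentropy_int : Integrable (fun x => u x * log (u x) - u x + 1) μ :=
    (hulog_int.sub hu_int).add (integrable_const 1)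
  calc K * ∫ x, u x ∂μ = ∫ x, K * u x ∂μ := (integral_const_mul K _).symm
    _ ≤ ∫ x, (u x * log (u x) - u x + 1 + (exp K - 1)) ∂μ := by
        refine integral_mono_ae (hu_int.const_mul K)
          (hentropy_int.add (integrable_const _)) ?_
        filter_upwards [hu_nonneg] with x hx
        linarith [mul_le_mul_log_sub_add_exp hx K]
    _ = (∫ x, (u x * log (u x) - u x + 1) ∂μ) + (exp K - 1) * μ.real Set.univ := by
        rw [integral_add hentropy_int (integrable_const _), integral_const, smul_eq_mul,
          mul_comm (μ.real _)]

theorem L1_bound_from_entropy_general {X : Type*} [MeasurableSpace X] (μ : Measure X)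
    [IsFiniteMeasure μ] (u : X → ℝ)
    (hu_nonneg : ∀ᵐ x ∂μ, 0 ≤ u x)
    (hu_int : Integrable u μ)
    (hulog_int : Integrable (fun x => u x * Real.log (u x)) μ)
    (K : ℝ) (hK : 0 < K) :
    (∫ x, u x ∂μ) ≤
      (1 / K) * ((∫ x, (u x * Real.log (u x) - u x + 1) ∂μ)
        + (Real.exp K - 1) * (μ Set.univ).toReal) := by
  rw [one_div_mul_eq_div, le_div_iff₀ hK, mul_comm]
  exact mul_integral_le_integral_mul_log_add hu_nonneg hu_int hulog_int K

/-- L¹-bound from an entropy bound (core estimate in the proof of Lemma 2.1):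
on a finite measure space, for `u ≥ 0` a.e. with `u` and `u log u` integrable and any `K > 0`,
`∫ u dμ ≤ (1/K) (∫ (u log u − u + 1) dμ + (e^K − 1) μ(X))`. -/
theorem L1_bound_from_entropy {X : Type*} [MeasurableSpace X] (μ : Measure X)
    [IsFiniteMeasure μ] (u : X → ℝ) (hu_meas : Measurable u)
    (hu_nonneg : ∀ᵐ x ∂μ, 0 ≤ u x)
    (hu_int : Integrable u μ)
    (hulog_int : Integrable (fun x => u x * Real.log (u x)) μ)
    (K : ℝ) (hK : 0 < K) :
    (∫ x, u x ∂μ) ≤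
      (1 / K) * ((∫ x, (u x * Real.log (u x) - u x + 1) ∂μ)
        + (Real.exp K - 1) * (μ Set.univ).toReal) :=
  L1_bound_from_entropy_general μ u hu_nonneg hu_int hulog_int K hK
end

section
/- Gagliardo–Nirenberg inequality on an interval (inequality (e4), d = 1): for all real numbers a < b there exists a constant C > 0 such that for every continuously differentiable function f : ℝ → ℝ one has ∫_a^b f(x)⁴ dx ≤ C · ( ∫_a^b (f'(x)² + f(x)²) dx ) · ( ∫_a^b |f(x)| dx )². -/
/-!
Let `m = min |f|` on `[a, b]`, so that `(b - a) m ≤ ‖f‖₁`. The fundamental theorem of calculus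
applied to `f³` gives `|f|³ ≤ m³ + 3J` on `[a, b]`, where `J = ∫ f² |f'|`, hence
`∫ f⁴ ≤ (m³ + 3J) ‖f‖₁`. Cauchy–Schwarz gives `J² ≤ ∫ f⁴ · ∫ f'²` and `‖f‖₁² ≤ (b - a) ∫ f²`.
By AM–GM, `3J ‖f‖₁ ≤ ½ ∫ f⁴ + (9/2) ‖f'‖₂² ‖f‖₁²` can be absorbed into the left-hand side, while
`m³ ‖f‖₁ ≤ ‖f‖₁⁴ / (b - a)³ ≤ ‖f‖₂² ‖f‖₁² / (b - a)²`; this yields `C = 2 / (b - a)² + 9`.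
-/

open MeasureTheory Real Set

theorem sq_integral_mul_le {α : Type*} [MeasurableSpace α] {μ : Measure α} {u v : α → ℝ}
    (hu : MemLp u 2 μ) (hv : MemLp v 2 μ) :
    (∫ x, u x * v x ∂μ) ^ 2 ≤ (∫ x, u x ^ 2 ∂μ) * ∫ x, v x ^ 2 ∂μ := by
  have holder := integral_mul_norm_le_Lp_mul_Lq Real.HolderConjugate.two_two
    (by simpa using hu) (by simpa using hv)
  simp only [Real.norm_eq_abs, Real.rpow_two, sq_abs, ← Real.sqrt_eq_rpow] at holder
  calc (∫ x, u x * v x ∂μ) ^ 2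
      ≤ (∫ x, |u x| * |v x| ∂μ) ^ 2 := by
        simpa only [sq_abs, abs_mul] using
          pow_le_pow_left₀ (abs_nonneg _)
            (abs_integral_le_integral_abs (f := fun x => u x * v x)) 2
    _ ≤ (√(∫ x, u x ^ 2 ∂μ) * √(∫ x, v x ^ 2 ∂μ)) ^ 2 :=
        pow_le_pow_left₀ (integral_nonneg fun _ => by positivity) holder 2
    _ = (∫ x, u x ^ 2 ∂μ) * ∫ x, v x ^ 2 ∂μ := by
        rw [mul_pow, sq_sqrt (integral_nonneg fun _ => sq_nonneg _),
          sq_sqrt (integral_nonneg fun _ => sq_nonneg _)]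

theorem sq_intervalIntegral_mul_le {a b : ℝ} (hab : a ≤ b) {u v : ℝ → ℝ}
    (hu : Continuous u) (hv : Continuous v) :
    (∫ x in a..b, u x * v x) ^ 2 ≤ (∫ x in a..b, u x ^ 2) * ∫ x in a..b, v x ^ 2 := by
  have memLp_two {w : ℝ → ℝ} (hw : Continuous w) : MemLp w 2 (volume.restrict (Ioc a b)) :=
    (memLp_two_iff_integrable_sq hw.aestronglyMeasurable).2 ((hw.pow 2).intervalIntegrable a b).1
  simp only [intervalIntegral.integral_of_le hab]
  exact sq_integral_mul_le (memLp_two hu) (memLp_two hv)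

theorem exists_mem_Icc_mul_le_intervalIntegral {a b : ℝ} (hab : a ≤ b) {g : ℝ → ℝ}
    (hg : ContinuousOn g (Icc a b)) : ∃ y ∈ Icc a b, (b - a) * g y ≤ ∫ x in a..b, g x := by
  obtain ⟨y, hy, hmin⟩ := isCompact_Icc.exists_isMinOn (nonempty_Icc.2 hab) hg
  refine ⟨y, hy, ?_⟩
  simpa using intervalIntegral.integral_mono_on hab intervalIntegrable_const
    (hg.intervalIntegrable_of_Icc (μ := volume) hab) fun x hx => hmin hx

theorem abs_sub_le_intervalIntegral_abs_deriv {g : ℝ → ℝ} (hg : ContDiff ℝ 1 g) {a b x y : ℝ}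
    (hx : x ∈ Icc a b) (hy : y ∈ Icc a b) : |g x - g y| ≤ ∫ t in a..b, |deriv g t| := by
  have hg' : Continuous (deriv g) := hg.continuous_deriv le_rfl
  rw [← intervalIntegral.integral_deriv_eq_sub (fun t _ => hg.differentiable one_ne_zero t)
    (hg'.intervalIntegrable y x), intervalIntegral.integral_of_le (hx.1.trans hx.2)]
  calc |∫ t in y..x, deriv g t| ≤ ∫ t in uIoc y x, |deriv g t| := by
        simpa only [Real.norm_eq_abs] using
          intervalIntegral.norm_integral_le_integral_norm_uIoc (f := deriv g)
    _ ≤ ∫ t in Ioc a b, |deriv g t| :=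
        setIntegral_mono_set (hg'.abs.intervalIntegrable a b).1
          (Filter.Eventually.of_forall fun _ => abs_nonneg _)
          (Ioc_subset_Ioc (le_min hy.1 hx.1) (max_le hy.2 hx.2)).eventuallyLE

theorem abs_pow_three_le_add_intervalIntegral {f : ℝ → ℝ} (hf : ContDiff ℝ 1 f) {a b x y : ℝ}
    (hx : x ∈ Icc a b) (hy : y ∈ Icc a b) :
    |f x| ^ 3 ≤ |f y| ^ 3 + 3 * ∫ t in a..b, f t ^ 2 * |deriv f t| := by
  have hcube := abs_sub_le_intervalIntegral_abs_deriv (hf.pow 3) hx hy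
  have hderiv (t : ℝ) : |deriv (fun s => f s ^ 3) t| = 3 * (f t ^ 2 * |deriv f t|) := by
    rw [deriv_fun_pow (hf.differentiable one_ne_zero t), abs_mul, abs_mul, abs_pow, sq_abs]
    norm_num
    ring
  simp only [hderiv, intervalIntegral.integral_const_mul] at hcube
  rw [← abs_pow, ← abs_pow]
  linarith [abs_sub_abs_le_abs_sub (f x ^ 3) (f y ^ 3)]

theorem intervalIntegral_pow_four_le {a b M : ℝ} (hab : a ≤ b) {f : ℝ → ℝ} (hf : Continuous f)
    (hM : ∀ x ∈ Icc a b, |f x| ^ 3 ≤ M) : ∫ x in a..b, f x ^ 4 ≤ M * ∫ x in a..b, |f x| := by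
  rw [← intervalIntegral.integral_const_mul]
  refine intervalIntegral.integral_mono_on hab ((hf.pow 4).intervalIntegrable a b)
    ((continuous_const.mul hf.abs).intervalIntegrable a b) fun x hx => ?_
  calc f x ^ 4 = |f x| ^ 3 * |f x| := by
        rw [← pow_succ, pow_abs, abs_of_nonneg (by positivity : 0 ≤ f x ^ 4)]
    _ ≤ M * |f x| := mul_le_mul_of_nonneg_right (hM x hx) (abs_nonneg _)

theorem gagliardo_nirenberg_arith {d m I J L P Q : ℝ} (hd : 0 < d) (hm : 0 ≤ m) (hI : 0 ≤ I)
    (hJ : 0 ≤ J) (hL : 0 ≤ L) (hP : 0 ≤ P) (hQ : 0 ≤ Q) (hmL : d * m ≤ L)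
    (hIJ : I ≤ (m ^ 3 + 3 * J) * L) (hJP : J ^ 2 ≤ I * P) (hLQ : L ^ 2 ≤ d * Q) :
    I ≤ (2 / d ^ 2 + 9) * (P + Q) * L ^ 2 := by
  have amgm : 6 * (J * L) ≤ I + 9 * P * L ^ 2 := by
    refine (pow_le_pow_iff_left₀ (by positivity) (by positivity) two_ne_zero).1 ?_
    nlinarith [four_mul_le_sq_add I (9 * P * L ^ 2), mul_le_mul_of_nonneg_right hJP (sq_nonneg L)]
  have hmin : d ^ 2 * (m ^ 3 * L) ≤ Q * L ^ 2 := by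
    have hcube : (d * m) ^ 3 ≤ L ^ 3 := pow_le_pow_left₀ (by positivity) hmL 3
    refine le_of_mul_le_mul_left ?_ hd
    nlinarith [mul_le_mul_of_nonneg_right hcube hL, mul_le_mul_of_nonneg_right hLQ (sq_nonneg L)]
  rw [div_add' _ _ _ (by positivity), div_mul_eq_mul_div, div_mul_eq_mul_div,
    le_div_iff₀ (by positivity)]
  nlinarith [mul_nonneg hQ (sq_nonneg L), mul_nonneg (mul_nonneg hP (sq_nonneg L)) (sq_nonneg d)]

/-- Gagliardo–Nirenberg inequality on an interval (inequality (e4), d = 1): for `a < b`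
there is `C > 0` such that for every `C¹` function `f : ℝ → ℝ`,
`∫_a^b f⁴ ≤ C ‖f‖_{H¹(a,b)}² ‖f‖_{L¹(a,b)}²`. -/
theorem gagliardo_nirenberg_interval (a b : ℝ) (hab : a < b) :
    ∃ C : ℝ, 0 < C ∧ ∀ f : ℝ → ℝ, ContDiff ℝ 1 f →
      (∫ x in a..b, f x ^ 4) ≤
        C * (∫ x in a..b, (deriv f x ^ 2 + f x ^ 2)) * (∫ x in a..b, |f x|) ^ 2 := by
  refine ⟨2 / (b - a) ^ 2 + 9, by positivity, fun f hf => ?_⟩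
  have hf₀ : Continuous f := hf.continuous
  have hf₁ : Continuous (deriv f) := hf.continuous_deriv le_rfl
  have hf₀2 : Continuous fun x => f x ^ 2 := hf₀.pow 2
  have hf₁2 : Continuous fun x => deriv f x ^ 2 := hf₁.pow 2
  obtain ⟨y, hy, hmin⟩ := exists_mem_Icc_mul_le_intervalIntegral hab.le hf₀.abs.continuousOn
  have hcube := intervalIntegral_pow_four_le hab.le hf₀ fun x hx =>
    abs_pow_three_le_add_intervalIntegral hf hx hy
  have hJ := sq_intervalIntegral_mul_le hab.le hf₀2 hf₁.abs
  have hL := sq_intervalIntegral_mul_le hab.le hf₀.abs (continuous_const (y := (1 : ℝ)))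
  simp only [← pow_mul, sq_abs, mul_one, one_pow, intervalIntegral.integral_const, smul_eq_mul]
    at hJ hL
  rw [intervalIntegral.integral_add (hf₁2.intervalIntegrable a b) (hf₀2.intervalIntegrable a b)]
  have nonneg {g : ℝ → ℝ} (hg : ∀ x, 0 ≤ g x) : 0 ≤ ∫ x in a..b, g x :=
    intervalIntegral.integral_nonneg hab.le fun x _ => hg x
  exact gagliardo_nirenberg_arith (sub_pos.2 hab) (abs_nonneg _) (nonneg fun _ => by positivity)
    (nonneg fun _ => by positivity) (nonneg fun _ => abs_nonneg _) (nonneg fun _ => sq_nonneg _)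
    (nonneg fun _ => sq_nonneg _) hmin hcube hJ (hL.trans_eq (mul_comm _ _))
end
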